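/- arXiv:1409.6282 — 2 statements merged into one kernel-verified Lean document; each statement's English description precedes it below -/
import Mathlib

section
/- The Lie algebra ideals of HV are exactly 0, ℂH_{0,0}, H, and HV itself; in particular, HV has exactly two nonzero proper ideals, and H is the unique maximal proper ideal of HV. -/
/-!
On the `β`-components `span {L_{β,j}}` and `span {H_{β,j}}`, with `L_{β,j}`, `H_{β,j}` read as
`t ^ j`, the operator `ad L_{0,0}` acts as `β + d/dt`. Applying polynomials in `ad L_{0,0}` to an
element of an ideal therefore kills all of its weights but one and lowers the top coordinate of
the remaining one to any prescribed index.

An element of an ideal `I` outside `ℂ H_{0,0}` yields in this way (after a bracket with some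
`H_{γ,0}` if it has an `L`-part) some `H_{γ,0}` with `γ ≠ 0`, and `[L_{δ-γ,k}, H_{γ,0}] = γ H_{δ,k}`
gives `H ⊆ I`. An element outside `H` then yields some `L_{β,0}` modulo `H`, hence `L_{0,0}`, and
brackets with `L_{0,0}` and `L_{-γ,0}` reach every `L_{α,i}`.
-/

/-- The generalized Heisenberg–Virasoro algebra `HV(Γ)`: a complex Lie algebra `V` equipped
with a basis `{L_{α,i}, H_{α,i} | α ∈ Γ, i ∈ ℤ₊}` satisfying the defining bracket relations
(any term whose second index would be `-1` has coefficient `0`, so truncated subtraction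
on `ℕ` is harmless). -/
structure HVData (Γ : AddSubgroup ℂ) (V : Type*) [LieRing V] [LieAlgebra ℂ V] where
  L : Γ → ℕ → V
  H : Γ → ℕ → V
  basis : Module.Basis ((↥Γ × ℕ) ⊕ (↥Γ × ℕ)) ℂ V
  basis_inl : ∀ (α : Γ) (i : ℕ), basis (Sum.inl (α, i)) = L α i
  basis_inr : ∀ (α : Γ) (i : ℕ), basis (Sum.inr (α, i)) = H α i
  lie_L_L : ∀ (α β : Γ) (i j : ℕ),
    ⁅L α i, L β j⁆ = ((β : ℂ) - (α : ℂ)) • L (α + β) (i + j)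
      + ((j : ℂ) - (i : ℂ)) • L (α + β) (i + j - 1)
  lie_L_H : ∀ (α β : Γ) (i j : ℕ),
    ⁅L α i, H β j⁆ = (β : ℂ) • H (α + β) (i + j) + (j : ℂ) • H (α + β) (i + j - 1)
  lie_H_H : ∀ (α β : Γ) (i j : ℕ), ⁅H α i, H β j⁆ = 0

namespace HVData

variable {Γ : AddSubgroup ℂ} {V : Type*} [LieRing V] [LieAlgebra ℂ V]

/-- The abelian ideal `H` of `HV`, as a submodule. -/
noncomputable def Hspan (hv : HVData Γ V) : Submodule ℂ V :=
  Submodule.span ℂ (Set.range fun p : ↥Γ × ℕ => hv.H p.1 p.2)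

/-- The graded piece `HV_α = span{L_{α,i}, H_{α,i} | i ∈ ℤ₊}`. -/
noncomputable def grade (hv : HVData Γ V) (α : Γ) : Submodule ℂ V :=
  Submodule.span ℂ (Set.range (hv.L α) ∪ Set.range (hv.H α))

/-- A derivation `D` has degree `γ` if `D (HV_α) ⊆ HV_{α+γ}` for all `α ∈ Γ`. -/
def HasDegree (hv : HVData Γ V) (D : LieDerivation ℂ V V) (γ : Γ) : Prop :=
  ∀ α : Γ, ∀ x ∈ hv.grade α, D x ∈ hv.grade (α + γ)

end HVData

section WeightIsolation

variable {K V ι : Type*} [Field K] [AddCommGroup V] [Module K V]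

/-- Writing the `β`-component of `x` as the polynomial `∑ j, c β j x • t ^ j`, the operator `D`
acts on it as `w β + d/dt`. -/
def ActsAsWeightAddDeriv (D : Module.End K V) (w : ι → K) (c : ι → ℕ → V →ₗ[K] K) : Prop :=
  ∀ β j x, c β j (D x) = w β * c β j x + (j + 1) * c β (j + 1) x

def weightSupport (c : ι → ℕ → V →ₗ[K] K) (x : V) : Set ι := {β | ∃ j, c β j x ≠ 0}

def IsTopCoord (c : ι → ℕ → V →ₗ[K] K) (β : ι) (m : ℕ) (x : V) : Prop :=
  c β m x ≠ 0 ∧ ∀ j, m < j → c β j x = 0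

variable {c : ι → ℕ → V →ₗ[K] K}

theorem exists_forall_ge_coord_eq_zero (hfin : ∀ x, {p : ι × ℕ | c p.1 p.2 x ≠ 0}.Finite)
    (x : V) (β : ι) : ∃ N, ∀ j, N ≤ j → c β j x = 0 := by
  obtain ⟨M, hM⟩ := ((hfin x).image Prod.snd).bddAbove
  refine ⟨M + 1, fun j hj => by_contra fun h => ?_⟩
  have : j ≤ M := hM ⟨(β, j), h, rfl⟩
  omega

theorem exists_isTopCoord_of_coord_ne_zero (hfin : ∀ x, {p : ι × ℕ | c p.1 p.2 x ≠ 0}.Finite)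
    {x : V} {β : ι} {j₀ : ℕ} (h : c β j₀ x ≠ 0) : ∃ m, j₀ ≤ m ∧ IsTopCoord c β m x := by
  classical
  obtain ⟨N, hN⟩ := exists_forall_ge_coord_eq_zero hfin x β
  have hj₀ : j₀ ≤ N := by
    by_contra hlt
    exact h (hN j₀ (by omega))
  refine ⟨Nat.findGreatest (fun j => c β j x ≠ 0) N, Nat.le_findGreatest hj₀ h,
    Nat.findGreatest_spec (P := fun j => c β j x ≠ 0) hj₀ h, fun j hj => ?_⟩
  by_cases hjN : j ≤ N
  · simpa using Nat.findGreatest_is_greatest hj hjN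
  · exact hN j (by omega)

variable {D : Module.End K V} {w : ι → K}

namespace ActsAsWeightAddDeriv

theorem coord_sub_smul (hD : ActsAsWeightAddDeriv D w c) (μ : K) (β : ι) (j : ℕ) (x : V) :
    c β j ((D - μ • 1) x) = (w β - μ) * c β j x + (j + 1) * c β (j + 1) x := by
  simp only [LinearMap.sub_apply, LinearMap.smul_apply, Module.End.one_apply, map_sub, map_smul,
    hD β j x, smul_eq_mul]
  ring

theorem weightSupport_sub_smul_subset (hD : ActsAsWeightAddDeriv D w c) (μ : K) (x : V) :
    weightSupport c ((D - μ • 1) x) ⊆ weightSupport c x := by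
  rintro β ⟨j, hj⟩
  by_contra h
  simp only [weightSupport, Set.mem_ofPred_eq, not_exists, not_not] at h
  rw [hD.coord_sub_smul, h, h, mul_zero, mul_zero, add_zero] at hj
  exact hj rfl

theorem isTopCoord_sub_smul (hD : ActsAsWeightAddDeriv D w c) {μ : K} {β : ι} {m : ℕ} {x : V}
    (hμ : w β ≠ μ) (h : IsTopCoord c β m x) : IsTopCoord c β m ((D - μ • 1) x) := by
  obtain ⟨hm, htop⟩ := h
  refine ⟨?_, fun j hj => ?_⟩
  · rw [hD.coord_sub_smul, htop (m + 1) (by omega), mul_zero, add_zero]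
    exact mul_ne_zero (sub_ne_zero.2 hμ) hm
  · rw [hD.coord_sub_smul, htop j hj, htop (j + 1) (by omega)]
    ring

theorem isTopCoord_sub_weight_smul [CharZero K] (hD : ActsAsWeightAddDeriv D w c) {β : ι}
    {m : ℕ} {x : V} (h : IsTopCoord c β (m + 1) x) : IsTopCoord c β m ((D - w β • 1) x) := by
  obtain ⟨hm, htop⟩ := h
  refine ⟨?_, fun j hj => ?_⟩
  · rw [hD.coord_sub_smul, sub_self, zero_mul, zero_add]
    exact mul_ne_zero (Nat.cast_add_one_ne_zero m) hm
  · rw [hD.coord_sub_smul, sub_self, zero_mul, zero_add, htop (j + 1) (by omega), mul_zero]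

variable {S : Submodule K V}

theorem exists_weightSupport_subset_diff (hD : ActsAsWeightAddDeriv D w c)
    (hS : ∀ x ∈ S, D x ∈ S) {β β₁ : ι} (hβ : w β ≠ w β₁) {m : ℕ} :
    ∀ (N : ℕ) (x : V), x ∈ S → (∀ j, N ≤ j → c β₁ j x = 0) → IsTopCoord c β m x →
      ∃ y ∈ S, weightSupport c y ⊆ weightSupport c x \ {β₁} ∧ IsTopCoord c β m y
  | 0, x, hx, h, htop =>
    ⟨x, hx, fun _ ⟨j, hj⟩ => ⟨⟨j, hj⟩, by rintro rfl; exact hj (h j (Nat.zero_le j))⟩, htop⟩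
  | N + 1, x, hx, h, htop => by
    obtain ⟨y, hyS, hy, hytop⟩ := exists_weightSupport_subset_diff hD hS hβ N ((D - w β₁ • 1) x)
      (S.sub_mem (hS x hx) (S.smul_mem _ hx)) (fun j hj => by
        rw [hD.coord_sub_smul, sub_self, zero_mul, zero_add, h (j + 1) (by omega), mul_zero])
      (hD.isTopCoord_sub_smul hβ htop)
    exact ⟨y, hyS, hy.trans (Set.sdiff_subset_sdiff_left (hD.weightSupport_sub_smul_subset _ x)),
      hytop⟩

theorem exists_weightSupport_subset_singleton (hD : ActsAsWeightAddDeriv D w c)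
    (hw : Function.Injective w) (hfin : ∀ x, {p : ι × ℕ | c p.1 p.2 x ≠ 0}.Finite)
    (hS : ∀ x ∈ S, D x ∈ S) {β : ι} {m : ℕ} (t : Finset ι) :
    ∀ x ∈ S, weightSupport c x ⊆ insert β t → IsTopCoord c β m x →
      ∃ y ∈ S, weightSupport c y ⊆ {β} ∧ IsTopCoord c β m y := by
  classical
  induction t using Finset.induction_on with
  | empty =>
    intro x hx hsupp htop
    exact ⟨x, hx, by simpa using hsupp, htop⟩
  | insert β₁ t _ ih =>
    intro x hx hsupp htop
    by_cases hβ : β₁ = β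
    · subst hβ
      exact ih x hx (by simpa using hsupp) htop
    obtain ⟨N, hN⟩ := exists_forall_ge_coord_eq_zero hfin x β₁
    obtain ⟨y, hyS, hy, hytop⟩ :=
      hD.exists_weightSupport_subset_diff hS (hw.ne (Ne.symm hβ)) N x hx hN htop
    refine ih y hyS (fun β' hβ' => ?_) hytop
    obtain ⟨hβ'x, hβ'₁⟩ := hy hβ'
    have := hsupp hβ'x
    simp only [Finset.coe_insert, Set.mem_insert_iff, Set.mem_singleton_iff, Finset.mem_coe]
      at this hβ'₁ ⊢
    tauto

theorem exists_isTopCoord_of_isTopCoord_add [CharZero K] (hD : ActsAsWeightAddDeriv D w c)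
    (hS : ∀ x ∈ S, D x ∈ S) {β : ι} {n : ℕ} :
    ∀ (k : ℕ) (x : V), x ∈ S → weightSupport c x ⊆ {β} → IsTopCoord c β (n + k) x →
      ∃ y ∈ S, weightSupport c y ⊆ {β} ∧ IsTopCoord c β n y
  | 0, x, hx, hsupp, htop => ⟨x, hx, hsupp, htop⟩
  | k + 1, x, hx, hsupp, htop =>
    exists_isTopCoord_of_isTopCoord_add hD hS k _ (S.sub_mem (hS x hx) (S.smul_mem _ hx))
      ((hD.weightSupport_sub_smul_subset _ x).trans hsupp) (hD.isTopCoord_sub_weight_smul htop)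

theorem exists_mem_concentrated [CharZero K] (hD : ActsAsWeightAddDeriv D w c)
    (hw : Function.Injective w) (hfin : ∀ x, {p : ι × ℕ | c p.1 p.2 x ≠ 0}.Finite)
    (hS : ∀ x ∈ S, D x ∈ S) {x : V} (hx : x ∈ S) {β : ι} {j₀ : ℕ} (h : c β j₀ x ≠ 0)
    {n : ℕ} (hn : n ≤ j₀) :
    ∃ y ∈ S, c β n y ≠ 0 ∧ ∀ β' j, c β' j y ≠ 0 → β' = β ∧ j ≤ n := by
  obtain ⟨m, hm, htop⟩ := exists_isTopCoord_of_coord_ne_zero hfin h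
  have hsupp : weightSupport c x ⊆ insert β ((hfin x).image Prod.fst).toFinset := by
    rintro β' ⟨j, hj⟩
    exact Set.mem_insert_of_mem _ (by simpa using ⟨j, hj⟩)
  obtain ⟨y, hyS, hy, hytop⟩ :=
    hD.exists_weightSupport_subset_singleton hw hfin hS _ x hx hsupp htop
  obtain ⟨k, rfl⟩ := Nat.exists_eq_add_of_le (hn.trans hm)
  obtain ⟨z, hzS, hz, hn, hztop⟩ := hD.exists_isTopCoord_of_isTopCoord_add hS k y hyS hy hytop
  refine ⟨z, hzS, hn, fun β' j hj => ?_⟩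
  obtain rfl : β' = β := hz ⟨j, hj⟩
  exact ⟨rfl, not_lt.1 fun hlt => hj (hztop j hlt)⟩

end ActsAsWeightAddDeriv

end WeightIsolation

theorem Module.Basis.eq_sum_of_repr_eq_zero {ι R M : Type*} [Semiring R] [AddCommMonoid M]
    [Module R M] (b : Module.Basis ι R M) {x : M} (s : Finset ι)
    (h : ∀ i ∉ s, b.repr x i = 0) : x = ∑ i ∈ s, b.repr x i • b i := by
  conv_lhs => rw [← b.linearCombination_repr x]
  exact Finsupp.linearCombination_apply_of_mem_supported R ((Finsupp.mem_supported' _ _).2 h)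

theorem lie_mem_span_of_basis {ι R L : Type*} [CommRing R] [LieRing L] [LieAlgebra R L]
    (b : Module.Basis ι R L) {s : Set L} (h : ∀ i, ∀ v ∈ s, ⁅b i, v⁆ ∈ Submodule.span R s)
    (y : L) {x : L} (hx : x ∈ Submodule.span R s) : ⁅y, x⁆ ∈ Submodule.span R s := by
  induction hx using Submodule.span_induction with
  | mem v hv =>
    have hy : y ∈ Submodule.span R (Set.range b) := b.span_eq ▸ Submodule.mem_top
    induction hy using Submodule.span_induction with
    | mem _ hu => obtain ⟨i, rfl⟩ := hu; exact h i v hv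
    | zero => simp
    | add u u' _ _ hu hu' => rw [add_lie]; exact add_mem hu hu'
    | smul r u _ hu => rw [smul_lie]; exact Submodule.smul_mem _ r hu
  | zero => simp
  | add u u' _ _ hu hu' => rw [lie_add]; exact add_mem hu hu'
  | smul r u _ hu => rw [lie_smul]; exact Submodule.smul_mem _ r hu

theorem AddSubgroup.exists_ne_zero_add_ne_zero {Γ : AddSubgroup ℂ} (hΓ : Γ ≠ ⊥) (α : Γ) :
    ∃ γ : Γ, γ ≠ 0 ∧ α + γ ≠ 0 := by
  obtain ⟨γ, hγ⟩ := AddSubgroup.ne_bot_iff_exists_ne_zero.1 hΓ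
  by_cases h : α + γ = 0
  · refine ⟨-γ, neg_ne_zero.2 hγ, fun h' => hγ ?_⟩
    have h₁ : (α : ℂ) + γ = 0 := congrArg Subtype.val h
    have h₂ : (α : ℂ) - γ = 0 := by simpa [sub_eq_add_neg] using congrArg Subtype.val h'
    exact Subtype.ext (by simpa using (by linear_combination (h₁ - h₂) / 2 : (γ : ℂ) = 0))
  · exact ⟨γ, hγ, h⟩

namespace HVData

variable {Γ : AddSubgroup ℂ} {V : Type*} [LieRing V] [LieAlgebra ℂ V] (hv : HVData Γ V)

noncomputable def coL (β : Γ) (j : ℕ) : V →ₗ[ℂ] ℂ := hv.basis.coord (Sum.inl (β, j))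

noncomputable def coH (β : Γ) (j : ℕ) : V →ₗ[ℂ] ℂ := hv.basis.coord (Sum.inr (β, j))

@[simp]
theorem coL_L (α β : Γ) (i j : ℕ) : hv.coL β j (hv.L α i) = if α = β ∧ i = j then 1 else 0 := by
  simp [coL, ← hv.basis_inl, Finsupp.single_apply]

@[simp]
theorem coL_H (α β : Γ) (i j : ℕ) : hv.coL β j (hv.H α i) = 0 := by
  simp [coL, ← hv.basis_inr]

@[simp]
theorem coH_L (α β : Γ) (i j : ℕ) : hv.coH β j (hv.L α i) = 0 := by
  simp [coH, ← hv.basis_inl]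

@[simp]
theorem coH_H (α β : Γ) (i j : ℕ) : hv.coH β j (hv.H α i) = if α = β ∧ i = j then 1 else 0 := by
  simp [coH, ← hv.basis_inr, Finsupp.single_apply]

theorem actsAsWeightAddDeriv_coL :
    ActsAsWeightAddDeriv (LieAlgebra.ad ℂ V (hv.L 0 0)) (fun β : Γ => (β : ℂ)) hv.coL := by
  intro β j x
  have h : (hv.coL β j).comp (LieAlgebra.ad ℂ V (hv.L 0 0))
      = (β : ℂ) • hv.coL β j + ((j : ℂ) + 1) • hv.coL β (j + 1) := by
    refine hv.basis.ext fun k => ?_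
    rcases k with ⟨α, i⟩ | ⟨α, i⟩
    · simp [hv.basis_inl, hv.lie_L_L]
      -- `i * [i - 1 = j] = (j + 1) * [i = j + 1]`
      split_ifs <;> simp_all <;> omega
    · simp [hv.basis_inr, hv.lie_L_H]
  simpa using LinearMap.congr_fun h x

theorem actsAsWeightAddDeriv_coH :
    ActsAsWeightAddDeriv (LieAlgebra.ad ℂ V (hv.L 0 0)) (fun β : Γ => (β : ℂ)) hv.coH := by
  intro β j x
  have h : (hv.coH β j).comp (LieAlgebra.ad ℂ V (hv.L 0 0))
      = (β : ℂ) • hv.coH β j + ((j : ℂ) + 1) • hv.coH β (j + 1) := by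
    refine hv.basis.ext fun k => ?_
    rcases k with ⟨α, i⟩ | ⟨α, i⟩
    · simp [hv.basis_inl, hv.lie_L_L]
    · simp [hv.basis_inr, hv.lie_L_H]
      split_ifs <;> simp_all <;> omega
  simpa using LinearMap.congr_fun h x

theorem finite_coL (x : V) : {p : Γ × ℕ | hv.coL p.1 p.2 x ≠ 0}.Finite :=
  ((hv.basis.repr x).support.finite_toSet.preimage Sum.inl_injective.injOn).subset
    fun p hp => by simpa [coL] using hp

theorem finite_coH (x : V) : {p : Γ × ℕ | hv.coH p.1 p.2 x ≠ 0}.Finite :=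
  ((hv.basis.repr x).support.finite_toSet.preimage Sum.inr_injective.injOn).subset
    fun p hp => by simpa [coH] using hp

theorem H_mem_Hspan (β : Γ) (j : ℕ) : hv.H β j ∈ hv.Hspan :=
  Submodule.subset_span ⟨(β, j), rfl⟩

theorem mem_Hspan_iff {x : V} : x ∈ hv.Hspan ↔ ∀ β j, hv.coL β j x = 0 := by
  have hH : (Set.range fun p : Γ × ℕ => hv.H p.1 p.2) = hv.basis '' Set.range Sum.inr := by
    rw [← Set.range_comp]
    exact congrArg Set.range (funext fun p => (hv.basis_inr p.1 p.2).symm)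
  rw [Hspan, hH, Module.Basis.mem_span_image]
  constructor
  · intro h β j
    by_contra hne
    obtain ⟨p, hp⟩ := h (Finsupp.mem_support_iff.2 hne)
    exact Sum.inr_ne_inl hp
  · rintro h (⟨β, j⟩ | p) hk
    · exact absurd (h β j) (Finsupp.mem_support_iff.1 hk)
    · exact ⟨p, rfl⟩

theorem span_H00_le_Hspan : Submodule.span ℂ {hv.H 0 0} ≤ hv.Hspan :=
  (Submodule.span_singleton_le_iff_mem _ _).2 (hv.H_mem_Hspan 0 0)

theorem eq_sum_coH_smul_H {x : V} (hx : x ∈ hv.Hspan) (s : Finset (Γ × ℕ))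
    (h : ∀ β j, (β, j) ∉ s → hv.coH β j x = 0) :
    x = ∑ p ∈ s, hv.coH p.1 p.2 x • hv.H p.1 p.2 := by
  have hsupp : ∀ k ∉ s.map Function.Embedding.inr, hv.basis.repr x k = 0 := by
    rintro (⟨β, j⟩ | ⟨β, j⟩) hk
    · exact hv.mem_Hspan_iff.1 hx β j
    · exact h β j (by simpa using hk)
  conv_lhs => rw [hv.basis.eq_sum_of_repr_eq_zero _ hsupp]
  simp [coH, hv.basis_inr]

theorem lie_mem_Hspan (y : V) {x : V} (hx : x ∈ hv.Hspan) : ⁅y, x⁆ ∈ hv.Hspan := by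
  refine lie_mem_span_of_basis hv.basis ?_ y hx
  rintro (⟨α, i⟩ | ⟨α, i⟩) _ ⟨⟨β, j⟩, rfl⟩
  · rw [hv.basis_inl, hv.lie_L_H]
    exact add_mem (Submodule.smul_mem _ _ (hv.H_mem_Hspan _ _))
      (Submodule.smul_mem _ _ (hv.H_mem_Hspan _ _))
  · rw [hv.basis_inr, hv.lie_H_H]
    exact zero_mem _

theorem lie_mem_span_H00 (y : V) {x : V} (hx : x ∈ Submodule.span ℂ {hv.H 0 0}) :
    ⁅y, x⁆ ∈ Submodule.span ℂ {hv.H 0 0} := by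
  refine lie_mem_span_of_basis hv.basis ?_ y hx
  rintro (⟨α, i⟩ | ⟨α, i⟩) _ rfl
  · simp [hv.basis_inl, hv.lie_L_H]
  · simp [hv.basis_inr, hv.lie_H_H]

theorem coH_lie_H (γ α : Γ) (i : ℕ) (x : V) :
    hv.coH (α + γ) i ⁅hv.H γ 0, x⁆ = -(γ : ℂ) * hv.coL α i x := by
  have h : (hv.coH (α + γ) i).comp (LieAlgebra.ad ℂ V (hv.H γ 0)) = -(γ : ℂ) • hv.coL α i := by
    refine hv.basis.ext fun k => ?_
    rcases k with ⟨α', i'⟩ | ⟨α', i'⟩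
    · simp [hv.basis_inl, ← lie_skew (hv.H γ 0), hv.lie_L_H]
    · simp [hv.basis_inr, hv.lie_H_H]
  simpa using LinearMap.congr_fun h x

theorem Hspan_le_of_H_mem {I : LieIdeal ℂ V} {γ : Γ} (hγ : γ ≠ 0) (h : hv.H γ 0 ∈ I) :
    hv.Hspan ≤ (I : Submodule ℂ V) := by
  rw [Hspan, Submodule.span_le]
  rintro _ ⟨⟨δ, k⟩, rfl⟩
  have hbr : ⁅hv.L (δ - γ) k, hv.H γ 0⁆ = (γ : ℂ) • hv.H δ k := by simp [hv.lie_L_H]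
  have hmem := I.lie_mem (x := hv.L (δ - γ) k) h
  rw [hbr] at hmem
  exact (Submodule.smul_mem_iff _ (by simpa using hγ)).1 hmem

theorem Hspan_le_of_coH_ne_zero (hΓ : Γ ≠ ⊥) {I : LieIdeal ℂ V} {x : V} (hxI : x ∈ I)
    (hxH : x ∈ hv.Hspan) {β : Γ} {j : ℕ} (hβj : (β, j) ≠ (0, 0)) (h : hv.coH β j x ≠ 0) :
    hv.Hspan ≤ (I : Submodule ℂ V) := by
  have hS : ∀ y ∈ (I : Submodule ℂ V) ⊓ hv.Hspan,
      LieAlgebra.ad ℂ V (hv.L 0 0) y ∈ (I : Submodule ℂ V) ⊓ hv.Hspan :=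
    fun y hy => ⟨I.lie_mem hy.1, hv.lie_mem_Hspan _ hy.2⟩
  have isolate {n : ℕ} (hn : n ≤ j) := hv.actsAsWeightAddDeriv_coH.exists_mem_concentrated
    Subtype.coe_injective hv.finite_coH hS ⟨hxI, hxH⟩ h hn
  by_cases hβ : β = 0
  · -- `H_{0,0}` is central, so stop at index 1 and move `H_{0,1}` to `H_{γ,0}` with `ad L_{γ,0}`
    subst hβ
    obtain ⟨y, ⟨hyI, hyH⟩, hy₁, hy⟩ := isolate (n := 1) (by simp at hβj; omega)
    have hy_eq : y = hv.coH 0 1 y • hv.H 0 1 + hv.coH 0 0 y • hv.H 0 0 := by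
      conv_lhs => rw [hv.eq_sum_coH_smul_H hyH {(0, 1), (0, 0)} fun β' j' hs => by
        by_contra hne
        obtain ⟨rfl, hj'⟩ := hy β' j' hne
        interval_cases j' <;> simp at hs]
      rw [Finset.sum_pair (by simp)]
    obtain ⟨γ, hγ⟩ := AddSubgroup.ne_bot_iff_exists_ne_zero.1 hΓ
    have hbr : ⁅hv.L γ 0, y⁆ = hv.coH 0 1 y • hv.H γ 0 := by
      rw [hy_eq]
      simp [hv.lie_L_H]
    refine hv.Hspan_le_of_H_mem hγ ((Submodule.smul_mem_iff _ hy₁).1 ?_)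
    rw [← hbr]
    exact I.lie_mem hyI
  · obtain ⟨y, ⟨hyI, hyH⟩, hy₀, hy⟩ := isolate (Nat.zero_le j)
    have hy_eq : y = hv.coH β 0 y • hv.H β 0 := by
      conv_lhs => rw [hv.eq_sum_coH_smul_H hyH {(β, 0)} fun β' j' hs => by
        by_contra hne
        obtain ⟨rfl, hj'⟩ := hy β' j' hne
        simp_all]
      rw [Finset.sum_singleton]
    refine hv.Hspan_le_of_H_mem hβ ((Submodule.smul_mem_iff _ hy₀).1 ?_)
    rw [← hy_eq]
    exact hyI

theorem Hspan_le_of_notMem_span_H00 (hΓ : Γ ≠ ⊥) {I : LieIdeal ℂ V} {x : V} (hxI : x ∈ I)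
    (hx : x ∉ Submodule.span ℂ {hv.H 0 0}) : hv.Hspan ≤ (I : Submodule ℂ V) := by
  by_cases hxH : x ∈ hv.Hspan
  · obtain ⟨β, j, hβj, h⟩ : ∃ β j, (β, j) ≠ (0, 0) ∧ hv.coH β j x ≠ 0 := by
      by_contra! hall
      apply hx
      rw [hv.eq_sum_coH_smul_H hxH {(0, 0)} fun β j hs => hall β j (by simpa using hs),
        Finset.sum_singleton]
      exact Submodule.smul_mem _ _ (Submodule.mem_span_singleton_self _)
    exact hv.Hspan_le_of_coH_ne_zero hΓ hxI hxH hβj h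
  · obtain ⟨α, i, h⟩ : ∃ α i, hv.coL α i x ≠ 0 := by simpa [mem_Hspan_iff] using hxH
    obtain ⟨γ, hγ, hαγ⟩ := AddSubgroup.exists_ne_zero_add_ne_zero hΓ α
    -- `[H_{γ,0}, L_{α,i}] = -γ H_{α+γ,i}` moves the `L`-coordinate into `H`, away from `H_{0,0}`
    refine hv.Hspan_le_of_coH_ne_zero hΓ (I.lie_mem (x := hv.H γ 0) hxI) ?_
      (β := α + γ) (j := i) (by simp [hαγ]) ?_
    · rw [← lie_skew]
      exact neg_mem (hv.lie_mem_Hspan x (hv.H_mem_Hspan γ 0))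
    · rw [coH_lie_H]
      exact mul_ne_zero (by simpa using hγ) h

theorem L_mem_of_coL_ne_zero {I : LieIdeal ℂ V} (hH : hv.Hspan ≤ (I : Submodule ℂ V)) {x : V}
    (hxI : x ∈ I) {β : Γ} {j : ℕ} (h : hv.coL β j x ≠ 0) : hv.L β 0 ∈ I := by
  obtain ⟨y, hyI, hy₀, hy⟩ := hv.actsAsWeightAddDeriv_coL.exists_mem_concentrated
    Subtype.coe_injective hv.finite_coL (fun x hx => I.lie_mem hx) hxI h (Nat.zero_le j)
  have hrest : y - hv.coL β 0 y • hv.L β 0 ∈ hv.Hspan := by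
    rw [mem_Hspan_iff]
    intro β' j'
    rw [map_sub, map_smul, coL_L, smul_eq_mul]
    split_ifs with hk
    · obtain ⟨rfl, rfl⟩ := hk
      ring
    · rw [mul_zero, sub_zero]
      by_contra hne
      obtain ⟨rfl, hj'⟩ := hy β' j' hne
      exact hk ⟨rfl, by omega⟩
  have hmem : hv.coL β 0 y • hv.L β 0 ∈ I := by
    simpa using sub_mem hyI (hH hrest)
  exact (Submodule.smul_mem_iff _ hy₀).1 hmem

theorem L00_mem_of_L_mem {I : LieIdeal ℂ V} {β : Γ} (h : hv.L β 0 ∈ I) : hv.L 0 0 ∈ I := by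
  by_cases hβ : β = 0
  · exact hβ ▸ h
  have hbr : ⁅hv.L (-β) 0, hv.L β 0⁆ = (2 * (β : ℂ)) • hv.L 0 0 := by
    rw [hv.lie_L_L]
    simp [two_mul]
  have hmem := I.lie_mem (x := hv.L (-β) 0) h
  rw [hbr] at hmem
  exact (Submodule.smul_mem_iff _ (mul_ne_zero two_ne_zero (by simpa using hβ))).1 hmem

theorem L_mem_of_L00_mem {I : LieIdeal ℂ V} (h : hv.L 0 0 ∈ I) {β : Γ} (hβ : β ≠ 0) :
    ∀ j, hv.L β j ∈ I := by
  have key (j : ℕ) :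
      -(β : ℂ) • hv.L β j = ⁅hv.L β j, hv.L 0 0⁆ + (j : ℂ) • hv.L β (j - 1) := by
    rw [hv.lie_L_L]
    simp
  have hβ' : -(β : ℂ) ≠ 0 := neg_ne_zero.2 (by simpa using hβ)
  intro j
  induction j with
  | zero =>
    refine (Submodule.smul_mem_iff (I : Submodule ℂ V) hβ').1 ?_
    simpa [key] using I.lie_mem h
  | succ j ih =>
    refine (Submodule.smul_mem_iff (I : Submodule ℂ V) hβ').1 ?_
    rw [key]
    exact add_mem (I.lie_mem h) (by simpa using Submodule.smul_mem (I : Submodule ℂ V) _ ih)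

theorem L_zero_mem_of_forall_L_mem {I : LieIdeal ℂ V} {γ : Γ} (hγ : γ ≠ 0)
    (hL : ∀ j, hv.L γ j ∈ I) :
    ∀ j, hv.L 0 j ∈ I := by
  have key (j : ℕ) :
      (2 * (γ : ℂ)) • hv.L 0 j = ⁅hv.L (-γ) 0, hv.L γ j⁆ - (j : ℂ) • hv.L 0 (j - 1) := by
    rw [hv.lie_L_L]
    simp [two_mul]
  have hγ' : 2 * (γ : ℂ) ≠ 0 := mul_ne_zero two_ne_zero (by simpa using hγ)
  intro j
  induction j with
  | zero =>
    refine (Submodule.smul_mem_iff (I : Submodule ℂ V) hγ').1 ?_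
    simpa [key] using I.lie_mem (hL 0)
  | succ j ih =>
    refine (Submodule.smul_mem_iff (I : Submodule ℂ V) hγ').1 ?_
    rw [key]
    exact sub_mem (I.lie_mem (hL _)) (by simpa using Submodule.smul_mem (I : Submodule ℂ V) _ ih)

theorem eq_top_of_L00_mem (hΓ : Γ ≠ ⊥) {I : LieIdeal ℂ V} (hH : hv.Hspan ≤ (I : Submodule ℂ V))
    (h : hv.L 0 0 ∈ I) : (I : Submodule ℂ V) = ⊤ := by
  obtain ⟨γ, hγ⟩ := AddSubgroup.ne_bot_iff_exists_ne_zero.1 hΓ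
  rw [eq_top_iff, ← hv.basis.span_eq, Submodule.span_le]
  rintro _ ⟨⟨β, j⟩ | ⟨β, j⟩, rfl⟩
  · rw [hv.basis_inl]
    by_cases hβ : β = 0
    · subst hβ
      exact hv.L_zero_mem_of_forall_L_mem hγ (hv.L_mem_of_L00_mem h hγ) j
    · exact hv.L_mem_of_L00_mem h hβ j
  · rw [hv.basis_inr]
    exact hH (hv.H_mem_Hspan β j)

theorem eq_top_of_notMem_Hspan (hΓ : Γ ≠ ⊥) {I : LieIdeal ℂ V} {x : V} (hxI : x ∈ I)
    (hx : x ∉ hv.Hspan) : (I : Submodule ℂ V) = ⊤ := by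
  obtain ⟨α, i, h⟩ : ∃ α i, hv.coL α i x ≠ 0 := by simpa [mem_Hspan_iff] using hx
  have hH := hv.Hspan_le_of_notMem_span_H00 hΓ hxI fun hs => hx (hv.span_H00_le_Hspan hs)
  exact hv.eq_top_of_L00_mem hΓ hH (hv.L00_mem_of_L_mem (hv.L_mem_of_coL_ne_zero hH hxI h))

theorem toSubmodule_eq_bot_or_span_H00_or_Hspan_or_top (hΓ : Γ ≠ ⊥) (I : LieIdeal ℂ V) :
    (I : Submodule ℂ V) = ⊥ ∨ (I : Submodule ℂ V) = Submodule.span ℂ {hv.H 0 0} ∨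
      (I : Submodule ℂ V) = hv.Hspan ∨ (I : Submodule ℂ V) = ⊤ := by
  by_cases hI : (I : Submodule ℂ V) ≤ Submodule.span ℂ {hv.H 0 0}
  · by_cases hbot : (I : Submodule ℂ V) = ⊥
    · exact Or.inl hbot
    refine Or.inr (Or.inl (le_antisymm hI ?_))
    obtain ⟨z, hzI, hz⟩ := Submodule.exists_mem_ne_zero_of_ne_bot hbot
    obtain ⟨a, rfl⟩ := Submodule.mem_span_singleton.1 (hI hzI)
    rw [Submodule.span_singleton_le_iff_mem]
    exact (Submodule.smul_mem_iff _ (left_ne_zero_of_smul hz)).1 hzI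
  · obtain ⟨x, hxI, hx⟩ := Set.not_subset.1 hI
    have hH := hv.Hspan_le_of_notMem_span_H00 hΓ hxI hx
    by_cases hI' : (I : Submodule ℂ V) ≤ hv.Hspan
    · exact Or.inr (Or.inr (Or.inl (le_antisymm hI' hH)))
    · obtain ⟨y, hyI, hy⟩ := Set.not_subset.1 hI'
      exact Or.inr (Or.inr (Or.inr (hv.eq_top_of_notMem_Hspan hΓ hyI hy)))

theorem bot_lt_span_H00 : (⊥ : Submodule ℂ V) < Submodule.span ℂ {hv.H 0 0} := by
  rw [bot_lt_iff_ne_bot, Ne, Submodule.span_singleton_eq_bot, ← hv.basis_inr]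
  exact hv.basis.ne_zero _

theorem span_H00_lt_Hspan : Submodule.span ℂ {hv.H 0 0} < hv.Hspan := by
  refine SetLike.lt_iff_le_and_exists.2 ⟨hv.span_H00_le_Hspan, hv.H 0 1, hv.H_mem_Hspan 0 1, ?_⟩
  rintro hmem
  obtain ⟨a, ha⟩ := Submodule.mem_span_singleton.1 hmem
  simpa using congrArg (hv.coH 0 1) ha

theorem Hspan_lt_top : hv.Hspan < ⊤ := by
  refine lt_top_iff_ne_top.2 fun h => ?_
  have := hv.mem_Hspan_iff.1 (h ▸ Submodule.mem_top : hv.L 0 0 ∈ hv.Hspan) 0 0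
  simp at this

end HVData

/-- The Lie ideals of `HV` are exactly `0`, `ℂ H_{0,0}`, `H` and `HV`;
these four are strictly increasing (so there are exactly two nonzero proper ideals), and
`H` is the unique maximal proper ideal. -/
theorem HV_ideals (Γ : AddSubgroup ℂ) (hΓ : Γ ≠ ⊥)
    {V : Type*} [LieRing V] [LieAlgebra ℂ V] (hv : HVData Γ V) :
    (Set.range fun I : LieIdeal ℂ V => (I : Submodule ℂ V))
      = {⊥, Submodule.span ℂ {hv.H 0 0}, hv.Hspan, ⊤} ∧
    (⊥ : Submodule ℂ V) < Submodule.span ℂ {hv.H 0 0} ∧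
    Submodule.span ℂ {hv.H 0 0} < hv.Hspan ∧
    hv.Hspan < (⊤ : Submodule ℂ V) ∧
    ∀ I : LieIdeal ℂ V, (I : Submodule ℂ V) ≠ ⊤ → (I : Submodule ℂ V) ≤ hv.Hspan := by
  have hcases := hv.toSubmodule_eq_bot_or_span_H00_or_Hspan_or_top hΓ
  refine ⟨?_, hv.bot_lt_span_H00, hv.span_H00_lt_Hspan, hv.Hspan_lt_top, fun I hI => ?_⟩
  · ext S
    constructor
    · rintro ⟨I, rfl⟩
      simpa using hcases I
    · rintro (rfl | rfl | rfl | rfl)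
      · exact ⟨⊥, LieSubmodule.bot_toSubmodule (R := ℂ) (L := V)⟩
      · exact ⟨{ toSubmodule := _, lie_mem := fun hx => hv.lie_mem_span_H00 _ hx }, rfl⟩
      · exact ⟨{ toSubmodule := _, lie_mem := fun hx => hv.lie_mem_Hspan _ hx }, rfl⟩
      · exact ⟨⊤, LieSubmodule.top_toSubmodule (R := ℂ) (L := V)⟩
  · rcases hcases I with h | h | h | h
    · exact h ▸ bot_le
    · exact h ▸ hv.span_H00_le_Hspan
    · exact h.le
    · exact absurd h hI
end

section
/- Let γ ∈ Γ with γ ≠ 0 and let D be a derivation of HV of degree γ such that D(L_{0,0}) = 0. Then D = 0. (In the proof one uses that HV is generated as a Lie algebra by {L_{α,0}, L_{0,1}, H_{α,0} | α ∈ Γ}.) -/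
/-!
Since `D` kills `L_{0,0}`, it commutes with `ad L_{0,0}`. On `HV_α`, `ad L_{0,0}` acts as `α`
plus a lowering operator `X_{α,i} ↦ i X_{α,i-1}` (`X = L, H`), so `HV_α` lies in the generalized
`α`-eigenspace. By induction on `i`, `D X_{α,i}` is then an honest `α`-eigenvector of
`ad L_{0,0}`; but it lies in `HV_{α+γ}`, inside the generalized `(α+γ)`-eigenspace, and `γ ≠ 0`
forces it to vanish.
-/

open Module End

theorem Module.End.mem_maxGenEigenspace_of_apply_eq {R M : Type*} [CommRing R] [AddCommGroup M]
    [Module R M] {f : End R M} {μ : R} {X : ℕ → M}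
    (hX : ∀ i, f (X i) = μ • X i + (i : R) • X (i - 1)) (j : ℕ) :
    X j ∈ f.maxGenEigenspace μ := by
  have hsub : ∀ i, (f - μ • 1) (X i) = (i : R) • X (i - 1) := fun i => by simp [hX]
  induction j with
  | zero => exact (f.mem_maxGenEigenspace μ _).2 ⟨1, by simp [hsub]⟩
  | succ j ih =>
    obtain ⟨k, hk⟩ := (f.mem_maxGenEigenspace μ _).1 ih
    refine (f.mem_maxGenEigenspace μ _).2 ⟨k + 1, ?_⟩
    rw [pow_succ, mul_apply, hsub, Nat.add_sub_cancel, map_smul, hk, smul_zero]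

theorem LieDerivation.apply_eq_zero_of_mem_maxGenEigenspace {K L : Type*} [Field K] [LieRing L]
    [LieAlgebra K L] {D : LieDerivation K L L} {z x : L} {μ ν : K} (hz : D z = 0)
    (hμν : μ ≠ ν)
    (hDx : D x ∈ (LieAlgebra.ad K L z).maxGenEigenspace ν) (h : D ⁅z, x⁆ = μ • D x) :
    D x = 0 := by
  have heigen : D x ∈ (LieAlgebra.ad K L z).genEigenspace μ 1 := by
    rw [mem_genEigenspace_one, LieAlgebra.ad_apply, ← h, D.apply_lie_eq_add, hz, zero_lie,
      add_zero]
  exact Submodule.disjoint_def.1 (disjoint_genEigenspace _ hμν 1 ⊤) _ heigen hDx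

namespace HVData

variable {Γ : AddSubgroup ℂ} {V : Type*} [LieRing V] [LieAlgebra ℂ V] (hv : HVData Γ V)

theorem lie_L_zero_zero_L (α : Γ) (i : ℕ) :
    ⁅hv.L 0 0, hv.L α i⁆ = (α : ℂ) • hv.L α i + (i : ℂ) • hv.L α (i - 1) := by
  simp [hv.lie_L_L]

theorem lie_L_zero_zero_H (α : Γ) (i : ℕ) :
    ⁅hv.L 0 0, hv.H α i⁆ = (α : ℂ) • hv.H α i + (i : ℂ) • hv.H α (i - 1) := by
  simp [hv.lie_L_H]

theorem L_mem_grade (α : Γ) (i : ℕ) : hv.L α i ∈ hv.grade α :=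
  Submodule.subset_span (Or.inl ⟨i, rfl⟩)

theorem H_mem_grade (α : Γ) (i : ℕ) : hv.H α i ∈ hv.grade α :=
  Submodule.subset_span (Or.inr ⟨i, rfl⟩)

theorem grade_le_maxGenEigenspace (α : Γ) :
    hv.grade α ≤ (LieAlgebra.ad ℂ V (hv.L 0 0)).maxGenEigenspace α := by
  refine Submodule.span_le.2 (Set.union_subset ?_ ?_) <;> rintro _ ⟨i, rfl⟩
  · exact mem_maxGenEigenspace_of_apply_eq (hv.lie_L_zero_zero_L α) i
  · exact mem_maxGenEigenspace_of_apply_eq (hv.lie_L_zero_zero_H α) i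

theorem HasDegree.apply_eq_zero_of_lie_L_zero_zero {hv : HVData Γ V} {D : LieDerivation ℂ V V}
    {γ : Γ} (hdeg : hv.HasDegree D γ) (hγ : γ ≠ 0) (h0 : D (hv.L 0 0) = 0) {α : Γ}
    {X : ℕ → V} (hX : ∀ i, X i ∈ hv.grade α)
    (hlie : ∀ i, ⁅hv.L 0 0, X i⁆ = (α : ℂ) • X i + (i : ℂ) • X (i - 1)) (i : ℕ) :
    D (X i) = 0 := by
  have hαγ : (α : ℂ) ≠ ((α + γ : Γ) : ℂ) := by simpa using hγ
  have hstep : ∀ i, D ⁅hv.L 0 0, X i⁆ = (α : ℂ) • D (X i) → D (X i) = 0 := fun i =>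
    D.apply_eq_zero_of_mem_maxGenEigenspace h0 hαγ
      (hv.grade_le_maxGenEigenspace _ (hdeg α _ (hX i)))
  induction i with
  | zero => exact hstep 0 (by simp [hlie])
  | succ i ih => exact hstep (i + 1) (by simp [hlie, ih])

end HVData

theorem HV_derivation_nonzero_degree_vanishes_general (Γ : AddSubgroup ℂ)
    {V : Type*} [LieRing V] [LieAlgebra ℂ V] (hv : HVData Γ V)
    (γ : Γ) (hγ : γ ≠ 0) (D : LieDerivation ℂ V V)
    (hdeg : hv.HasDegree D γ) (h0 : D (hv.L 0 0) = 0) :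
    D = 0 := by
  have hbasis : (D : V →ₗ[ℂ] V) = 0 := by
    refine hv.basis.ext ?_
    rintro (⟨α, i⟩ | ⟨α, i⟩)
    · simpa [hv.basis_inl] using
        hdeg.apply_eq_zero_of_lie_L_zero_zero hγ h0 (hv.L_mem_grade α) (hv.lie_L_zero_zero_L α) i
    · simpa [hv.basis_inr] using
        hdeg.apply_eq_zero_of_lie_L_zero_zero hγ h0 (hv.H_mem_grade α) (hv.lie_L_zero_zero_H α) i
  exact LieDerivation.ext (LinearMap.congr_fun hbasis)

/-- A derivation of `HV` of nonzero degree `γ` vanishing on `L_{0,0}` is zero. -/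
theorem HV_derivation_nonzero_degree_vanishes (Γ : AddSubgroup ℂ) (hΓ : Γ ≠ ⊥)
    {V : Type*} [LieRing V] [LieAlgebra ℂ V] (hv : HVData Γ V)
    (γ : Γ) (hγ : γ ≠ 0) (D : LieDerivation ℂ V V)
    (hdeg : hv.HasDegree D γ) (h0 : D (hv.L 0 0) = 0) :
    D = 0 :=
  HV_derivation_nonzero_degree_vanishes_general Γ hv γ hγ D hdeg h0
end
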